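/- Let Λ be a full-rank lattice in a finite-dimensional real vector space V, and let f : Λ → ℂ be a quasi-polynomial function. If there is a nonempty open cone Q ⊆ V (a nonempty open subset closed under multiplication by positive scalars) such that f(λ) = 0 for all λ ∈ Q ∩ Λ, then f is identically zero on Λ. -/

import Mathlib

/-!
Some lattice point `λ₀` lies in the cone, since rescaled lattice points approximate any
direction; then so does `μ = N • λ₀ ∈ Ξ₀`. For any lattice point `ξ`, the ray `ξ + n • μ`
stays in the coset `ξ + Ξ₀` and eventually enters the open cone, so the polynomial `p`
representing `f` on that coset has, restricted to the line `ξ + t • μ`, infinitely many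
roots. Hence that restriction vanishes, and in particular `f ξ = p ξ = 0`.
-/

noncomputable section

open Module

variable {V : Type*} [NormedAddCommGroup V] [NormedSpace ℝ V] [FiniteDimensional ℝ V]

/-- A full-rank lattice: a free `ℤ`-submodule of rank `dim V` that spans `V` over `ℝ`. -/
def IsLattice (Λ : Submodule ℤ V) : Prop :=
  Submodule.span ℝ (Λ : Set V) = ⊤ ∧ Nonempty (Basis (Fin (finrank ℝ V)) ℤ Λ)

/-- Polynomial functions on a real vector space, with values in `ℂ`:
the subalgebra of functions generated by (complexified) real linear functionals. -/
def IsPolyFun {W : Type*} [AddCommGroup W] [Module ℝ W] (p : W → ℂ) : Prop :=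
  p ∈ Algebra.adjoin ℂ {g : W → ℂ | ∃ l : W →ₗ[ℝ] ℝ, g = fun w => ((l w : ℝ) : ℂ)}

/-- A function is quasi-polynomial on the lattice `Ξ` if there is a finite-index
sublattice `Ξ₀` such that on every coset `ξ + Ξ₀` of a lattice point `ξ ∈ Ξ`, the function
agrees with a polynomial function. -/
def IsQuasiPoly {W : Type*} [AddCommGroup W] [Module ℝ W] (Ξ : Submodule ℤ W) (f : W → ℂ) :
    Prop :=
  ∃ Ξ₀ : Submodule ℤ W, Ξ₀ ≤ Ξ ∧ (∃ N : ℕ, 0 < N ∧ ∀ v ∈ Ξ, (N : ℤ) • v ∈ Ξ₀) ∧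
    ∀ ξ ∈ Ξ, ∃ p : W → ℂ, IsPolyFun p ∧ ∀ μ ∈ Ξ₀, f (ξ + μ) = p (ξ + μ)

open Filter Topology

theorem tendsto_int_floor_mul_div_atTop (c : ℝ) :
    Tendsto (fun t : ℝ => (⌊t * c⌋ : ℝ) / t) atTop (𝓝 c) := by
  have hlower : Tendsto (fun t : ℝ => c - t⁻¹) atTop (𝓝 c) := by
    simpa using tendsto_const_nhds.sub (tendsto_inv_atTop_zero (𝕜 := ℝ))
  refine tendsto_of_tendsto_of_tendsto_of_le_of_le' hlower tendsto_const_nhds ?_ ?_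
  · filter_upwards [eventually_gt_atTop 0] with t ht
    rw [le_div_iff₀ ht, sub_mul, inv_mul_cancel₀ ht.ne', mul_comm]
    linarith [Int.lt_floor_add_one (t * c)]
  · filter_upwards [eventually_gt_atTop 0] with t ht
    rw [div_le_iff₀ ht, mul_comm]
    exact Int.floor_le _

section Cone

variable {E : Type*} [AddCommGroup E] [Module ℝ E] [TopologicalSpace E] [IsTopologicalAddGroup E]
  [ContinuousSMul ℝ E] {Q : Set E}

theorem exists_mem_isOpen_cone_of_span_eq_top {Λ : Submodule ℤ E}
    (hspan : Submodule.span ℝ (Λ : Set E) = ⊤) (hQne : Q.Nonempty) (hQopen : IsOpen Q)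
    (hQcone : ∀ x ∈ Q, ∀ t : ℝ, 0 < t → t • x ∈ Q) :
    ∃ lam ∈ Λ, lam ∈ Q := by
  obtain ⟨x, hx⟩ := hQne
  obtain ⟨c, hcΛ, rfl⟩ := Submodule.mem_span_set.mp (hspan ▸ Submodule.mem_top : x ∈ _)
  -- `t⁻¹ • ∑ ⌊t c_v⌋ v` is a rescaled lattice point converging to `∑ c_v v`
  have happrox : Tendsto (fun t : ℝ => ∑ v ∈ c.support, ((⌊t * c v⌋ : ℝ) / t) • v) atTop
      (𝓝 (c.sum fun v a => a • v)) :=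
    tendsto_finsetSum _ fun v _ => (tendsto_int_floor_mul_div_atTop (c v)).smul_const v
  obtain ⟨t, htQ, ht⟩ :=
    ((happrox.eventually (hQopen.mem_nhds hx)).and (eventually_gt_atTop 0)).exists
  refine ⟨∑ v ∈ c.support, ⌊t * c v⌋ • v,
    Submodule.sum_mem _ fun v hv => Submodule.smul_mem _ _ (hcΛ hv), ?_⟩
  convert hQcone _ htQ t ht using 1
  simp only [Finset.smul_sum, smul_smul, mul_div_cancel₀ _ ht.ne', Int.cast_smul_eq_zsmul]

theorem eventually_add_smul_mem_of_isOpen_cone (hQopen : IsOpen Q)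
    (hQcone : ∀ x ∈ Q, ∀ t : ℝ, 0 < t → t • x ∈ Q) {μ : E} (hμ : μ ∈ Q) (ξ : E) :
    ∀ᶠ t : ℝ in atTop, ξ + t • μ ∈ Q := by
  have hlim : Tendsto (fun t : ℝ => μ + t⁻¹ • ξ) atTop (𝓝 μ) := by
    simpa using tendsto_const_nhds.add ((tendsto_inv_atTop_zero (𝕜 := ℝ)).smul_const ξ)
  filter_upwards [hlim.eventually (hQopen.mem_nhds hμ), eventually_gt_atTop 0] with t hQ ht
  convert hQcone _ hQ t ht using 1
  rw [smul_add, smul_smul, mul_inv_cancel₀ ht.ne', one_smul, add_comm]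

end Cone

theorem Polynomial.eq_zero_of_eventually_isRoot_natCast {R : Type*} [CommRing R] [IsDomain R]
    [CharZero R] {F : Polynomial R} (h : ∀ᶠ n : ℕ in atTop, F.IsRoot n) : F = 0 :=
  F.eq_zero_of_infinite_isRoot <|
    ((Nat.frequently_atTop_iff_infinite.mp h.frequently).image Nat.cast_injective.injOn).mono
      (Set.image_subset_iff.mpr fun _ hn => hn)

namespace IsPolyFun

variable {W : Type*} [AddCommGroup W] [Module ℝ W] {p : W → ℂ}

theorem exists_polynomial_eval_line (hp : IsPolyFun p) (a b : W) :
    ∃ F : Polynomial ℂ, ∀ t : ℝ, p (a + t • b) = F.eval (t : ℂ) := by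
  induction hp using Algebra.adjoin_induction with
  | mem g hg =>
    obtain ⟨l, rfl⟩ := hg
    refine ⟨.C (l a : ℂ) + .C (l b : ℂ) * .X, fun t => ?_⟩
    simp only [map_add, map_smul, smul_eq_mul, Complex.ofReal_add, Complex.ofReal_mul,
      Polynomial.eval_add, Polynomial.eval_C, Polynomial.eval_mul, Polynomial.eval_X]
    ring
  | algebraMap r => exact ⟨.C r, fun t => by simp⟩
  | add x y _ _ ihx ihy =>
    obtain ⟨F, hF⟩ := ihx
    obtain ⟨G, hG⟩ := ihy
    exact ⟨F + G, fun t => by simp [hF t, hG t]⟩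
  | mul x y _ _ ihx ihy =>
    obtain ⟨F, hF⟩ := ihx
    obtain ⟨G, hG⟩ := ihy
    exact ⟨F * G, fun t => by simp [hF t, hG t]⟩

theorem eq_zero_of_eventually_eq_zero_on_ray (hp : IsPolyFun p) {ξ μ : W}
    (h : ∀ᶠ n : ℕ in atTop, p (ξ + (n : ℝ) • μ) = 0) : p ξ = 0 := by
  obtain ⟨F, hF⟩ := hp.exists_polynomial_eval_line ξ μ
  have hF0 : F = 0 := Polynomial.eq_zero_of_eventually_isRoot_natCast <|
    h.mono fun n hn => by rw [Polynomial.IsRoot, ← Complex.ofReal_natCast, ← hF, hn]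
  simpa [hF0] using hF 0

end IsPolyFun

/-- A quasi-polynomial function on a full-rank lattice vanishing on the lattice points of a
nonempty open cone vanishes identically. -/
theorem quasiPoly_eq_zero_of_vanishes_on_cone
    (Λ : Submodule ℤ V) (hΛ : IsLattice Λ)
    (f : V → ℂ) (hf : IsQuasiPoly Λ f)
    (Q : Set V) (hQne : Q.Nonempty) (hQopen : IsOpen Q)
    (hQcone : ∀ x ∈ Q, ∀ t : ℝ, 0 < t → t • x ∈ Q)
    (hvanish : ∀ lam ∈ (Λ : Set V) ∩ Q, f lam = 0) :
    ∀ lam ∈ Λ, f lam = 0 := by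
  obtain ⟨Ξ₀, hle, ⟨N, hN, hNmem⟩, hpoly⟩ := hf
  obtain ⟨lam₀, hlam₀Λ, hlam₀Q⟩ := exists_mem_isOpen_cone_of_span_eq_top hΛ.1 hQne hQopen hQcone
  obtain ⟨μ, hμQ, hμΞ₀⟩ : ∃ μ ∈ Q, ∀ n : ℕ, (n : ℝ) • μ ∈ Ξ₀ :=
    ⟨(N : ℝ) • lam₀, hQcone _ hlam₀Q _ (Nat.cast_pos.mpr hN), fun n => by
      simpa only [Nat.cast_smul_eq_nsmul, natCast_zsmul] using Ξ₀.smul_mem n (hNmem _ hlam₀Λ)⟩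
  intro ξ hξ
  obtain ⟨p, hp, hfp⟩ := hpoly ξ hξ
  have hray : ∀ᶠ n : ℕ in atTop, p (ξ + (n : ℝ) • μ) = 0 :=
    (tendsto_natCast_atTop_atTop.eventually
      (eventually_add_smul_mem_of_isOpen_cone hQopen hQcone hμQ ξ)).mono fun n hn => by
        rw [← hfp _ (hμΞ₀ n)]
        exact hvanish _ ⟨Λ.add_mem hξ (hle (hμΞ₀ n)), hn⟩
  simpa only [add_zero, hp.eq_zero_of_eventually_eq_zero_on_ray hray] using hfp 0 Ξ₀.zero_mem

end
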